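/- The series f(z) := Σ_{l ∈ ℤ³\{0}} (l₁² + l₂² + l₃²)^{−(3+2z)/2} converges for every real z > 0, and lim_{z→0⁺} z·f(z) = 2π. (This is the residue at z = 0 of the Epstein zeta function z ↦ Σ_{l≠0} |l|^{−3−2z} of the lattice ℤ³, which gives the value of the noncommutative residue τ₀ entering the Chern–Simons action on the noncommutative 3-torus.) -/

import Mathlib

/-!
The Epstein zeta series f(z) = Σ_{l ∈ ℤ³\{0}} (l₁²+l₂²+l₃²)^{-(3+2z)/2} converges
for every real z > 0 and lim_{z→0⁺} z·f(z) = 2π.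
-/

open scoped BigOperators

/-- The summand of the Epstein zeta function of the lattice ℤ³:
`|l|^{-(3+2z)}` written as `(l₁²+l₂²+l₃²)^{-(3+2z)/2}`. -/
noncomputable def epsteinSummand (z : ℝ) (l : {l : Fin 3 → ℤ // l ≠ 0}) : ℝ :=
  (∑ i : Fin 3, ((l.1 i : ℝ)) ^ 2) ^ (-(3 + 2 * z) / 2)

/-- The Epstein zeta function `f(z) = Σ_{l ≠ 0} |l|^{-3-2z}` of the lattice ℤ³. -/
noncomputable def epsteinZeta (z : ℝ) : ℝ :=
  ∑' l : {l : Fin 3 → ℤ // l ≠ 0}, epsteinSummand z l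

/-!
Rounding coordinates to the nearest integers cuts `ℝ³` into unit cubes, and every point of the
cube around `l` lies within distance `√3 / 2 ≤ 1` of `l`. Hence, for `l ≠ 0` and `x` in that
cube, `(1 + |x|)^(-s) ≤ |l|^(-s) ≤ max (|x| - 1) 1 ^ (-s)`, and summing over `l ≠ 0` squeezes
`Σ |l|^(-s)` between integrals over `ℝ³` of two radial functions. In polar coordinates, after
the shift `r ↦ r ∓ 1`, both integrals are explicit and equal `4π / (s - 3) + O(1)` as `s → 3⁺`.
With `s = 3 + 2z` this is `f(z) = 2π / z + O(1)`.
-/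

open MeasureTheory Set Filter Real Topology

lemma integral_Ioi_comp_add_right {E : Type*} [NormedAddCommGroup E] [NormedSpace ℝ E]
    (f : ℝ → E) (a d : ℝ) :
    ∫ x in Ioi a, f (x + d) = ∫ x in Ioi (a + d), f x := by
  simpa using (measurePreserving_add_right volume d).setIntegral_preimage_emb
    (measurableEmbedding_addRight d) f (Ioi (a + d))

lemma integrableOn_Ioi_comp_add_right {E : Type*} [NormedAddCommGroup E] {f : ℝ → E} (a d : ℝ) :
    IntegrableOn (fun x => f (x + d)) (Ioi a) ↔ IntegrableOn f (Ioi (a + d)) := by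
  have := (measurePreserving_add_right volume d).integrableOn_comp_preimage
    (measurableEmbedding_addRight d) (f := f) (s := Ioi (a + d))
  rwa [preimage_add_const_Ioi, add_sub_cancel_right] at this

lemma sq_add_mul_rpow_neg {u : ℝ} (hu : 0 < u) (c s : ℝ) :
    (u + c) ^ 2 * u ^ (-s) = u ^ (2 - s) + 2 * c * u ^ (1 - s) + c ^ 2 * u ^ (-s) := by
  rw [sub_eq_add_neg, sub_eq_add_neg, rpow_add hu, rpow_add hu, rpow_two, rpow_one]
  ring

section

variable {s : ℝ}

lemma integrableOn_Ioi_one_sq_add_mul_rpow (hs : 3 < s) (c : ℝ) :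
    IntegrableOn (fun u => (u + c) ^ 2 * u ^ (-s)) (Ioi 1) := by
  have h (p : ℝ) (hp : p < -1) : IntegrableOn (fun u : ℝ => u ^ p) (Ioi 1) :=
    integrableOn_Ioi_rpow_of_lt hp one_pos
  refine (((h (2 - s) (by linarith)).add ((h (1 - s) (by linarith)).const_mul (2 * c))).add
    ((h (-s) (by linarith)).const_mul (c ^ 2))).congr_fun (fun u hu => ?_) measurableSet_Ioi
  exact (sq_add_mul_rpow_neg (zero_lt_one.trans hu) c s).symm

lemma integral_Ioi_one_sq_add_mul_rpow (hs : 3 < s) (c : ℝ) :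
    ∫ u in Ioi 1, (u + c) ^ 2 * u ^ (-s) = 1 / (s - 3) + 2 * c / (s - 2) + c ^ 2 / (s - 1) := by
  have h (p : ℝ) (hp : p < -1) : IntegrableOn (fun u : ℝ => u ^ p) (Ioi 1) :=
    integrableOn_Ioi_rpow_of_lt hp one_pos
  have hval (p : ℝ) (hp : p < -1) : ∫ u in Ioi (1 : ℝ), u ^ p = -1 / (p + 1) := by
    rw [integral_Ioi_rpow_of_lt hp one_pos, one_rpow]
  have h₂ := h (2 - s) (by linarith)
  have h₁ := (h (1 - s) (by linarith)).const_mul (2 * c)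
  have h₀ := (h (-s) (by linarith)).const_mul (c ^ 2)
  rw [setIntegral_congr_fun measurableSet_Ioi
      (fun u hu => sq_add_mul_rpow_neg (zero_lt_one.trans hu) c s),
    integral_add (f := fun u => u ^ (2 - s) + 2 * c * u ^ (1 - s)) (h₂.add h₁) h₀,
    integral_add h₂ h₁, integral_const_mul, integral_const_mul,
    hval _ (by linarith), hval _ (by linarith), hval _ (by linarith)]
  have : s - 3 ≠ 0 := by linarith
  have : s - 2 ≠ 0 := by linarith
  have : s - 1 ≠ 0 := by linarith
  have : 2 - s + 1 ≠ 0 := by linarith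
  have : 1 - s + 1 ≠ 0 := by linarith
  have : -s + 1 ≠ 0 := by linarith
  field_simp
  ring

lemma sq_mul_one_add_rpow_eq (s r : ℝ) :
    r ^ 2 * (1 + r) ^ (-s) = ((r + 1) + -1) ^ 2 * (r + 1) ^ (-s) := by
  rw [add_neg_cancel_right, add_comm r]

lemma integrableOn_sq_mul_one_add_rpow (hs : 3 < s) :
    IntegrableOn (fun r : ℝ => r ^ 2 * (1 + r) ^ (-s)) (Ioi 0) := by
  simp_rw [sq_mul_one_add_rpow_eq s]
  rw [integrableOn_Ioi_comp_add_right (f := fun u => (u + -1) ^ 2 * u ^ (-s)), zero_add]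
  exact integrableOn_Ioi_one_sq_add_mul_rpow hs (-1)

lemma integral_sq_mul_one_add_rpow (hs : 3 < s) :
    ∫ r in Ioi (0 : ℝ), r ^ 2 * (1 + r) ^ (-s) = 1 / (s - 3) - 2 / (s - 2) + 1 / (s - 1) := by
  simp_rw [sq_mul_one_add_rpow_eq s]
  rw [integral_Ioi_comp_add_right (fun u => (u + -1) ^ 2 * u ^ (-s)), zero_add,
    integral_Ioi_one_sq_add_mul_rpow hs]
  ring

lemma sq_mul_max_rpow_eq_of_two_lt (s : ℝ) {r : ℝ} (hr : 2 < r) :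
    r ^ 2 * max (r - 1) 1 ^ (-s) = ((r + -1) + 1) ^ 2 * (r + -1) ^ (-s) := by
  rw [max_eq_left (by linarith), neg_add_cancel_right, sub_eq_add_neg]

lemma sq_mul_max_rpow_eq_of_le_two (s : ℝ) {r : ℝ} (hr : r ≤ 2) :
    r ^ 2 * max (r - 1) 1 ^ (-s) = r ^ 2 := by
  rw [max_eq_right (by linarith), one_rpow, mul_one]

lemma integrableOn_sq_mul_max_rpow (hs : 3 < s) :
    IntegrableOn (fun r : ℝ => r ^ 2 * max (r - 1) 1 ^ (-s)) (Ioi 0) := by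
  rw [← Ioc_union_Ioi_eq_Ioi zero_le_two]
  refine IntegrableOn.union ?_ ?_
  · exact (continuous_pow 2).integrableOn_Ioc.congr_fun
      (fun r hr => (sq_mul_max_rpow_eq_of_le_two s hr.2).symm) measurableSet_Ioc
  · have h := (integrableOn_Ioi_comp_add_right (f := fun u => (u + 1) ^ 2 * u ^ (-s)) 2 (-1)).2
      (by rw [show (2 : ℝ) + -1 = 1 by norm_num]; exact integrableOn_Ioi_one_sq_add_mul_rpow hs 1)
    exact h.congr_fun (fun r hr => (sq_mul_max_rpow_eq_of_two_lt s hr).symm) measurableSet_Ioi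

lemma integral_sq_mul_max_rpow (hs : 3 < s) :
    ∫ r in Ioi (0 : ℝ), r ^ 2 * max (r - 1) 1 ^ (-s) =
      8 / 3 + (1 / (s - 3) + 2 / (s - 2) + 1 / (s - 1)) := by
  have hint := integrableOn_sq_mul_max_rpow hs
  rw [← Ioc_union_Ioi_eq_Ioi zero_le_two, setIntegral_union (Ioc_disjoint_Ioi le_rfl)
      measurableSet_Ioi (hint.mono_set Ioc_subset_Ioi_self)
      (hint.mono_set (Ioi_subset_Ioi zero_le_two)),
    setIntegral_congr_fun measurableSet_Ioc (fun r hr => sq_mul_max_rpow_eq_of_le_two s hr.2),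
    setIntegral_congr_fun measurableSet_Ioi (fun r hr => sq_mul_max_rpow_eq_of_two_lt s hr),
    integral_Ioi_comp_add_right (fun u => (u + 1) ^ 2 * u ^ (-s)),
    show (2 : ℝ) + -1 = 1 by norm_num, integral_Ioi_one_sq_add_mul_rpow hs,
    ← intervalIntegral.integral_of_le zero_le_two, integral_pow]
  norm_num

end

lemma integral_fun_norm_fin_three (f : ℝ → ℝ) :
    ∫ x : EuclideanSpace ℝ (Fin 3), f ‖x‖ = 4 * π * ∫ r in Ioi (0 : ℝ), r ^ 2 * f r := by
  rw [integral_fun_norm_addHaar volume f, finrank_euclideanSpace_fin, measureReal_def,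
    EuclideanSpace.volume_ball_fin_three]
  simp only [ENNReal.ofReal_one, one_pow, one_mul, smul_eq_mul, nsmul_eq_mul]
  rw [ENNReal.toReal_ofReal (by positivity)]
  push_cast
  ring

lemma integrable_fun_norm_fin_three {f : ℝ → ℝ} :
    Integrable (fun x : EuclideanSpace ℝ (Fin 3) => f ‖x‖) ↔
      IntegrableOn (fun r : ℝ => r ^ 2 * f r) (Ioi 0) := by
  rw [integrable_fun_norm_addHaar volume, finrank_euclideanSpace_fin]
  rfl

section

variable {ι : Type*}

noncomputable def latticePoint (l : ι → ℤ) : EuclideanSpace ℝ ι :=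
  WithLp.toLp 2 fun i => (l i : ℝ)

noncomputable def roundVec (x : EuclideanSpace ℝ ι) : ι → ℤ :=
  fun i => round (x i)

lemma measurable_roundVec : Measurable (roundVec (ι := ι)) := by
  refine measurable_pi_lambda _ fun i => ?_
  simp_rw [roundVec, round_eq]
  fun_prop

variable [Fintype ι]

lemma one_le_norm_latticePoint {l : ι → ℤ} (hl : l ≠ 0) : 1 ≤ ‖latticePoint l‖ := by
  obtain ⟨i, hi⟩ := Function.ne_iff.mp hl
  calc (1 : ℝ) ≤ |(l i : ℝ)| := by exact_mod_cast Int.one_le_abs hi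
    _ = ‖latticePoint l i‖ := (Real.norm_eq_abs _).symm
    _ ≤ ‖latticePoint l‖ := PiLp.norm_apply_le _ i

lemma norm_sub_latticePoint_roundVec_le (x : EuclideanSpace ℝ ι) :
    ‖x - latticePoint (roundVec x)‖ ≤ √(Fintype.card ι) / 2 := by
  rw [EuclideanSpace.norm_eq, show √(Fintype.card ι : ℝ) / 2 = √(Fintype.card ι / 4) by
    rw [sqrt_div' _ (by norm_num), show (4 : ℝ) = 2 ^ 2 by norm_num, sqrt_sq two_pos.le]]
  refine sqrt_le_sqrt ?_
  calc ∑ i, ‖(x - latticePoint (roundVec x)) i‖ ^ 2 ≤ ∑ _i : ι, (1 / 2 : ℝ) ^ 2 := by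
        gcongr with i
        exact abs_sub_round (x i)
    _ = Fintype.card ι / 4 := by
        rw [Finset.sum_const, Finset.card_univ, nsmul_eq_mul]
        ring

lemma volume_roundVec_preimage (l : ι → ℤ) : volume (roundVec ⁻¹' {l}) = 1 := by
  have hpre : roundVec ⁻¹' {l} = (MeasurableEquiv.toLp 2 (ι → ℝ)).symm ⁻¹'
      (univ.pi fun i => Ico ((l i : ℝ) - 1 / 2) (l i + 1 / 2)) := by
    ext x
    simp [roundVec, funext_iff, round_eq_iff]
  rw [hpre, (EuclideanSpace.volume_preserving_symm_measurableEquiv_toLp ι).measure_preimage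
    (MeasurableSet.univ_pi fun _ => measurableSet_Ico).nullMeasurableSet, volume_pi_pi]
  norm_num

lemma hasSum_setIntegral_roundVec_preimage {F : EuclideanSpace ℝ ι → ℝ} (hF : Integrable F) :
    HasSum (fun l : {l : ι → ℤ // l ≠ 0} => ∫ x in roundVec ⁻¹' {l.1}, F x)
      (∫ x in (roundVec ⁻¹' {0})ᶜ, F x) := by
  have hU : (⋃ l : {l : ι → ℤ // l ≠ 0}, roundVec ⁻¹' {l.1}) = (roundVec ⁻¹' {0})ᶜ := by
    ext x; simp
  rw [← hU]
  refine hasSum_integral_iUnion (fun l => measurable_roundVec (measurableSet_singleton _))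
    (fun l l' hll' => ?_) hF.integrableOn
  exact (disjoint_singleton.2 (Subtype.coe_injective.ne hll')).preimage _

end

lemma abs_norm_sub_norm_latticePoint_roundVec_le_one (x : EuclideanSpace ℝ (Fin 3)) :
    |‖x‖ - ‖latticePoint (roundVec x)‖| ≤ 1 := by
  refine (abs_norm_sub_norm_le _ _).trans ((norm_sub_latticePoint_roundVec_le x).trans ?_)
  rw [Fintype.card_fin, div_le_one two_pos, sqrt_le_left two_pos.le]
  norm_num

section

variable {s : ℝ}

lemma integrable_one_add_norm_rpow (hs : 3 < s) :
    Integrable fun x : EuclideanSpace ℝ (Fin 3) => (1 + ‖x‖) ^ (-s) :=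
  integrable_fun_norm_fin_three.2 (integrableOn_sq_mul_one_add_rpow hs)

lemma integrable_max_norm_sub_one_rpow (hs : 3 < s) :
    Integrable fun x : EuclideanSpace ℝ (Fin 3) => max (‖x‖ - 1) 1 ^ (-s) :=
  integrable_fun_norm_fin_three.2 (integrableOn_sq_mul_max_rpow hs)

lemma setIntegral_one_add_norm_rpow_le (hs : 3 < s) {l : Fin 3 → ℤ} (hl : l ≠ 0) :
    ∫ x in roundVec ⁻¹' {l}, (1 + ‖x‖) ^ (-s) ≤ ‖latticePoint l‖ ^ (-s) := by
  have hvol := volume_roundVec_preimage l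
  calc ∫ x in roundVec ⁻¹' {l}, (1 + ‖x‖) ^ (-s)
      ≤ ∫ _x in roundVec ⁻¹' {l}, ‖latticePoint l‖ ^ (-s) := by
        refine setIntegral_mono_on (integrable_one_add_norm_rpow hs).integrableOn
          (integrableOn_const (by simp [hvol])) (measurable_roundVec (measurableSet_singleton l))
          fun x hx => ?_
        rw [mem_preimage, mem_singleton_iff] at hx
        subst hx
        refine rpow_le_rpow_of_nonpos (by linarith [one_le_norm_latticePoint hl]) ?_ (by linarith)
        linarith [abs_le.1 (abs_norm_sub_norm_latticePoint_roundVec_le_one x)]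
    _ = ‖latticePoint l‖ ^ (-s) := by simp [measureReal_def, hvol]

lemma norm_rpow_le_setIntegral_max (hs : 3 < s) {l : Fin 3 → ℤ} (hl : l ≠ 0) :
    ‖latticePoint l‖ ^ (-s) ≤ ∫ x in roundVec ⁻¹' {l}, max (‖x‖ - 1) 1 ^ (-s) := by
  have hvol := volume_roundVec_preimage l
  calc ‖latticePoint l‖ ^ (-s) = ∫ _x in roundVec ⁻¹' {l}, ‖latticePoint l‖ ^ (-s) := by
        simp [measureReal_def, hvol]
    _ ≤ ∫ x in roundVec ⁻¹' {l}, max (‖x‖ - 1) 1 ^ (-s) := by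
        refine setIntegral_mono_on (integrableOn_const (by simp [hvol]))
          (integrable_max_norm_sub_one_rpow hs).integrableOn
          (measurable_roundVec (measurableSet_singleton l)) fun x hx => ?_
        rw [mem_preimage, mem_singleton_iff] at hx
        subst hx
        refine rpow_le_rpow_of_nonpos (lt_max_of_lt_right one_pos) (max_le ?_ ?_) (by linarith)
        · linarith [abs_le.1 (abs_norm_sub_norm_latticePoint_roundVec_le_one x)]
        · exact one_le_norm_latticePoint hl

lemma summable_norm_latticePoint_rpow (hs : 3 < s) :
    Summable fun l : {l : Fin 3 → ℤ // l ≠ 0} => ‖latticePoint l.1‖ ^ (-s) :=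
  (hasSum_setIntegral_roundVec_preimage (integrable_max_norm_sub_one_rpow hs)).summable
    |>.of_nonneg_of_le (fun _ => by positivity) fun l => norm_rpow_le_setIntegral_max hs l.2

lemma tsum_norm_latticePoint_rpow_le (hs : 3 < s) :
    ∑' l : {l : Fin 3 → ℤ // l ≠ 0}, ‖latticePoint l.1‖ ^ (-s) ≤
      4 * π * (8 / 3 + (1 / (s - 3) + 2 / (s - 2) + 1 / (s - 1))) := by
  have hF := integrable_max_norm_sub_one_rpow hs
  have hsum := hasSum_setIntegral_roundVec_preimage hF
  calc ∑' l : {l : Fin 3 → ℤ // l ≠ 0}, ‖latticePoint l.1‖ ^ (-s)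
      ≤ ∫ x in (roundVec ⁻¹' {0})ᶜ, max (‖x‖ - 1) 1 ^ (-s) :=
        hsum.tsum_eq ▸ (summable_norm_latticePoint_rpow hs).tsum_le_tsum
          (fun l => norm_rpow_le_setIntegral_max hs l.2) hsum.summable
    _ ≤ ∫ x, max (‖x‖ - 1) 1 ^ (-s) :=
        setIntegral_le_integral hF (.of_forall fun _ => by positivity)
    _ = _ := by rw [integral_fun_norm_fin_three (fun r => max (r - 1) 1 ^ (-s)),
        integral_sq_mul_max_rpow hs]

lemma le_tsum_norm_latticePoint_rpow (hs : 3 < s) :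
    4 * π * (1 / (s - 3) - 2 / (s - 2) + 1 / (s - 1)) - 1 ≤
      ∑' l : {l : Fin 3 → ℤ // l ≠ 0}, ‖latticePoint l.1‖ ^ (-s) := by
  have hF := integrable_one_add_norm_rpow hs
  have hsum := hasSum_setIntegral_roundVec_preimage hF
  have hvol := volume_roundVec_preimage (0 : Fin 3 → ℤ)
  have hcube : ∫ x in roundVec ⁻¹' {(0 : Fin 3 → ℤ)}, (1 + ‖x‖) ^ (-s) ≤ 1 := by
    calc ∫ x in roundVec ⁻¹' {(0 : Fin 3 → ℤ)}, (1 + ‖x‖) ^ (-s)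
        ≤ ∫ _x in roundVec ⁻¹' {0}, (1 : ℝ) :=
          setIntegral_mono_on hF.integrableOn (integrableOn_const (by simp [hvol]))
            (measurable_roundVec (measurableSet_singleton 0)) fun x _ =>
              rpow_le_one_of_one_le_of_nonpos (by linarith [norm_nonneg x]) (by linarith)
      _ = 1 := by simp [measureReal_def, hvol]
  have htail : ∫ x in (roundVec ⁻¹' {0})ᶜ, (1 + ‖x‖) ^ (-s) ≤
      ∑' l : {l : Fin 3 → ℤ // l ≠ 0}, ‖latticePoint l.1‖ ^ (-s) :=
    hsum.tsum_eq ▸ hsum.summable.tsum_le_tsum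
      (fun l : {l : Fin 3 → ℤ // l ≠ 0} => setIntegral_one_add_norm_rpow_le hs l.2)
      (summable_norm_latticePoint_rpow hs)
  have hsplit := integral_add_compl (measurable_roundVec (measurableSet_singleton 0)) hF
  rw [integral_fun_norm_fin_three (fun r => (1 + r) ^ (-s)), integral_sq_mul_one_add_rpow hs]
    at hsplit
  linarith

end

lemma epsteinSummand_eq (z : ℝ) (l : {l : Fin 3 → ℤ // l ≠ 0}) :
    epsteinSummand z l = ‖latticePoint l.1‖ ^ (-(3 + 2 * z)) := by
  rw [EuclideanSpace.norm_eq, sqrt_eq_rpow, ← rpow_mul (by positivity), epsteinSummand]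
  congr 1
  · simp [latticePoint]
  · ring

lemma abs_epsteinZeta_sub_two_pi_div_le {z : ℝ} (hz : 0 < z) :
    |epsteinZeta z - 2 * π / z| ≤ 21 * π := by
  have hs : 3 < 3 + 2 * z := by linarith
  have hζ : epsteinZeta z =
      ∑' l : {l : Fin 3 → ℤ // l ≠ 0}, ‖latticePoint l.1‖ ^ (-(3 + 2 * z)) :=
    tsum_congr (epsteinSummand_eq z)
  have hupper := tsum_norm_latticePoint_rpow_le hs
  have hlower := le_tsum_norm_latticePoint_rpow hs
  rw [← hζ, mul_add, mul_add, mul_add] at hupper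
  rw [← hζ, mul_add, mul_sub] at hlower
  have hpole : 4 * π * (1 / (3 + 2 * z - 3)) = 2 * π / z := by
    field_simp
    ring
  have ha : 2 / (3 + 2 * z - 2) ≤ 2 := by
    rw [div_le_iff₀ (by linarith)]
    linarith
  have hb₀ : 0 ≤ 1 / (3 + 2 * z - 1) := div_nonneg zero_le_one (by linarith)
  have hb₁ : 1 / (3 + 2 * z - 1) ≤ 1 / 2 := by
    rw [div_le_div_iff₀ (by linarith) two_pos]
    linarith
  have hπ := pi_gt_three
  rw [abs_le]
  constructor
  · linarith [mul_le_mul_of_nonneg_left ha pi_pos.le, mul_nonneg pi_pos.le hb₀]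
  · linarith [mul_le_mul_of_nonneg_left ha pi_pos.le, mul_le_mul_of_nonneg_left hb₁ pi_pos.le]

theorem epsteinZeta_summable_and_residue_eq_two_pi :
    (∀ z : ℝ, 0 < z → Summable fun l : {l : Fin 3 → ℤ // l ≠ 0} => epsteinSummand z l) ∧
    Filter.Tendsto (fun z : ℝ => z * epsteinZeta z)
      (nhdsWithin 0 (Set.Ioi 0)) (nhds (2 * Real.pi)) := by
  refine ⟨fun z hz => ?_, ?_⟩
  · simp_rw [epsteinSummand_eq]
    exact summable_norm_latticePoint_rpow (by linarith)
  · rw [tendsto_iff_norm_sub_tendsto_zero]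
    have hlim : Tendsto (fun z : ℝ => 21 * π * z) (𝓝[>] 0) (𝓝 0) :=
      tendsto_nhdsWithin_of_tendsto_nhds (by simpa using (continuous_const_mul (21 * π)).tendsto 0)
    refine squeeze_zero_norm' ?_ hlim
    filter_upwards [self_mem_nhdsWithin] with z (hz : 0 < z)
    rw [norm_norm, Real.norm_eq_abs,
      show z * epsteinZeta z - 2 * π = z * (epsteinZeta z - 2 * π / z) by field_simp,
      abs_mul, abs_of_pos hz, mul_comm (21 * π)]
    exact mul_le_mul_of_nonneg_left (abs_epsteinZeta_sub_two_pi_div_le hz) hz.le
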